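/- Define the one-step controllable-to set E(S) = { x ∈ Δ_{2^n} : ∃ u ∈ Δ_{2^m}, M_F u x ∈ S } for S ⊆ Δ_{2^n}, and set W_0 = {x^d}, W_{k+1} = E(W_0 ∪ W_1 ∪ ⋯ ∪ W_k) for k ≥ 0. Then the BCN x(t+1) = M_F u(t) x(t) is state-feedback stabilizable to x^d if and only if x^d ∈ E({x^d}) and ⋃_{k≥0} W_k = Δ_{2^n} (equivalently W_{2^n} = Δ_{2^n}). -/

import Mathlib

/-!
Necessity: along a stabilizing closed loop `x^d` is a fixed point, and a state that reaches `x^d`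
in `t` steps lies in some `W_k` (peel off one step at a time). Sufficiency: at `x^d` use a control
fixing it, and at any other state `x` a control moving it into some `W_j` with `j` below the least
index of a `W_k` containing `x`. That index then strictly decreases along every trajectory until it
hits `x^d`, and since `Δ_{2^n}` is finite the indices are bounded, which bounds the settling time.
Logical matrices are exactly the maps `Δ_{2^n} → Δ_{2^m}`, so any such feedback map is realized
by a logical matrix.
-/

open Matrix Kronecker

noncomputable section

/-- Row-major pairing `(i, j) ↦ N * i + j`, matching the standard Kronecker convention. -/
def kronEquiv (M N : ℕ) : Fin M × Fin N ≃ Fin (M * N) := finProdFinEquiv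

def vecKron {M N : ℕ} (u : Fin M → ℝ) (x : Fin N → ℝ) : Fin (M * N) → ℝ :=
  fun k => u ((kronEquiv M N).symm k).1 * x ((kronEquiv M N).symm k).2

/-- `δ_N^i` (0-indexed): the `i`-th column of the identity matrix `I_N`. -/
def eVec (N : ℕ) (i : Fin N) : Fin N → ℝ := fun j => if j = i then 1 else 0

/-- The set `Δ_N` of columns of the identity matrix. -/
def deltaSet (N : ℕ) : Set (Fin N → ℝ) := {x | ∃ i, x = eVec N i}

def IsLogical {m n : ℕ} (L : Matrix (Fin m) (Fin n) ℝ) : Prop :=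
  ∀ j, ∃ i, (fun k => L k j) = eVec m i

/-- The power-reducing matrix `PR_k = diag(δ_k^1, …, δ_k^k)`: column `j` is `δ_k^j ⊗ δ_k^j`. -/
def PRmat (k : ℕ) : Matrix (Fin (k * k)) (Fin k) ℝ :=
  Matrix.of fun i j => vecKron (eVec k j) (eVec k j) i

lemma stp_dim (n p : ℕ) : p * (Nat.lcm n p / p) = n * (Nat.lcm n p / n) := by
  rw [Nat.mul_div_cancel' (Nat.dvd_lcm_right n p), Nat.mul_div_cancel' (Nat.dvd_lcm_left n p)]

/-- The semi-tensor product `A ⋉ B = (A ⊗ I_{t/n})(B ⊗ I_{t/p})`, `t = lcm(n,p)`. -/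
def stp {m n p q : ℕ} (A : Matrix (Fin m) (Fin n) ℝ) (B : Matrix (Fin p) (Fin q) ℝ) :
    Matrix (Fin (m * (Nat.lcm n p / n))) (Fin (q * (Nat.lcm n p / p))) ℝ :=
  (Matrix.reindex (kronEquiv m _) (kronEquiv n _)
      (A ⊗ₖ (1 : Matrix (Fin (Nat.lcm n p / n)) (Fin (Nat.lcm n p / n)) ℝ))) *
  (Matrix.reindex ((kronEquiv p _).trans (finCongr (stp_dim n p))) (kronEquiv q _)
      (B ⊗ₖ (1 : Matrix (Fin (Nat.lcm n p / p)) (Fin (Nat.lcm n p / p)) ℝ)))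

open Set Function

theorem Set.EqOn.iterate_of_mapsTo {α : Type*} {f g : α → α} {s : Set α} (h : EqOn f g s)
    (hg : MapsTo g s s) : ∀ n, EqOn f^[n] g^[n] s
  | 0 => fun _ _ => rfl
  | n + 1 => fun x hx => by
    rw [iterate_succ_apply, iterate_succ_apply, h hx]
    exact h.iterate_of_mapsTo hg n (hg hx)

section Feedback

variable {X U : Type*}

def oneStepControllableTo (step : U → X → X) (D : Set X) (DU : Set U) (S : Set X) : Set X :=
  {x | x ∈ D ∧ ∃ u ∈ DU, step u x ∈ S}

def closedLoop (step : U → X → X) (g : X → U) : X → X := fun x => step (g x) x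

def Stabilizes (σ : X → X) (D : Set X) (xd : X) : Prop :=
  ∃ T, ∀ x ∈ D, ∀ t ≥ T, σ^[t] x = xd

structure IsControllableToSeq (step : U → X → X) (D : Set X) (DU : Set U) (xd : X)
    (W : ℕ → Set X) : Prop where
  zero : W 0 = {xd}
  succ : ∀ k, W (k + 1) = oneStepControllableTo step D DU (⋃ i ∈ Finset.range (k + 1), W i)

variable {step : U → X → X} {D : Set X} {DU : Set U} {xd : X} {W : ℕ → Set X}

theorem closedLoop_mapsTo (hstep : ∀ u ∈ DU, ∀ x ∈ D, step u x ∈ D) {g : X → U}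
    (hg : MapsTo g D DU) : MapsTo (closedLoop step g) D D :=
  fun _ hx => hstep _ (hg hx) _ hx

theorem closedLoop_eqOn (step : U → X → X) {g g' : X → U} (h : EqOn g g' D) :
    EqOn (closedLoop step g) (closedLoop step g') D := fun x hx => by
  simp only [closedLoop, h hx]

theorem Stabilizes.isFixedPt {σ : X → X} (h : Stabilizes σ D xd) (hD : D.Nonempty) :
    IsFixedPt σ xd := by
  obtain ⟨T, hT⟩ := h
  obtain ⟨x, hx⟩ := hD
  have h1 := hT x hx (T + 1) T.le_succ
  rwa [iterate_succ_apply', hT x hx T le_rfl] at h1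

theorem iterate_eq_of_descending (hW0 : W 0 = {xd}) {σ : X → X} (hfix : IsFixedPt σ xd)
    (hdesc : ∀ k, ∀ x ∈ W k, x ≠ xd → ∃ j < k, σ x ∈ W j) :
    ∀ t, ∀ k ≤ t, ∀ x ∈ W k, σ^[t] x = xd
  | 0, k, hk, x, hx => by rwa [Nat.le_zero.1 hk, hW0] at hx
  | t + 1, k, hk, x, hx => by
    by_cases hne : x = xd
    · rw [hne]
      exact hfix.iterate _
    obtain ⟨j, hjk, hj⟩ := hdesc k x hx hne
    exact iterate_eq_of_descending hW0 hfix hdesc t j (by omega) _ hj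

namespace IsControllableToSeq

theorem mem_succ_iff (hW : IsControllableToSeq step D DU xd W) {k : ℕ} {x : X} :
    x ∈ W (k + 1) ↔ x ∈ D ∧ ∃ u ∈ DU, ∃ j ≤ k, step u x ∈ W j := by
  simp [hW.succ, oneStepControllableTo]

theorem subset (hW : IsControllableToSeq step D DU xd W) (hxd : xd ∈ D) : ∀ k, W k ⊆ D
  | 0 => by rw [hW.zero]; exact singleton_subset_iff.2 hxd
  | _ + 1 => fun _ hx => (hW.mem_succ_iff.1 hx).1

theorem exists_mem_of_iterate_eq (hW : IsControllableToSeq step D DU xd W) {g : X → U}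
    (hg : MapsTo g D DU) (hσ : MapsTo (closedLoop step g) D D) :
    ∀ t, ∀ x ∈ D, (closedLoop step g)^[t] x = xd → ∃ k, x ∈ W k
  | 0, _, _, hx => ⟨0, by rw [hW.zero]; exact hx⟩
  | t + 1, x, hxD, hx => by
    obtain ⟨k, hk⟩ := hW.exists_mem_of_iterate_eq hg hσ t _ (hσ hxD) hx
    exact ⟨k + 1, hW.mem_succ_iff.2 ⟨hxD, g x, hg hxD, k, le_rfl, hk⟩⟩

theorem conditions_of_stabilizes (hW : IsControllableToSeq step D DU xd W) (hxd : xd ∈ D)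
    {g : X → U} (hg : MapsTo g D DU) (hσ : MapsTo (closedLoop step g) D D)
    (hstab : Stabilizes (closedLoop step g) D xd) :
    xd ∈ oneStepControllableTo step D DU {xd} ∧ ⋃ k, W k = D := by
  refine ⟨⟨hxd, g xd, hg hxd, hstab.isFixedPt ⟨xd, hxd⟩⟩, ?_⟩
  obtain ⟨T, hT⟩ := hstab
  refine (iUnion_subset (hW.subset hxd)).antisymm fun x hx => ?_
  exact mem_iUnion.2 (hW.exists_mem_of_iterate_eq hg hσ T x hx (hT x hx T le_rfl))

theorem exists_descending_feedback (hW : IsControllableToSeq step D DU xd W)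
    (hxd : xd ∈ oneStepControllableTo step D DU {xd}) (hD : D ⊆ ⋃ k, W k) :
    ∃ g : X → U, MapsTo g D DU ∧ IsFixedPt (closedLoop step g) xd ∧
      ∀ k, ∀ x ∈ W k, x ≠ xd → ∃ j < k, closedLoop step g x ∈ W j := by
  obtain ⟨hxdD, u₀, hu₀, hfix⟩ := hxd
  have hchoice : ∀ x, ∃ u, (x ∈ D → u ∈ DU) ∧ (x = xd → step u x = xd) ∧
      ∀ k, x ∈ W k → x ≠ xd → ∃ j < k, step u x ∈ W j := by
    intro x
    by_cases hx : x = xd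
    · subst hx
      exact ⟨u₀, fun _ => hu₀, fun _ => hfix, fun _ _ h => (h rfl).elim⟩
    by_cases hxD : x ∈ D
    swap
    · exact ⟨u₀, fun h => absurd h hxD, fun h => absurd h hx,
        fun k hk => absurd (hW.subset hxdD k hk) hxD⟩
    classical
    have hex : ∃ k, x ∈ W k := mem_iUnion.1 (hD hxD)
    obtain ⟨k, hk⟩ : ∃ k, Nat.find hex = k + 1 := by
      refine Nat.exists_eq_succ_of_ne_zero fun h0 => hx ?_
      simpa [h0, hW.zero] using Nat.find_spec hex
    obtain ⟨-, u, hu, j, hjk, hj⟩ := hW.mem_succ_iff.1 (hk ▸ Nat.find_spec hex)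
    refine ⟨u, fun _ => hu, fun h => absurd h hx, fun k' hk' _ => ⟨j, ?_, hj⟩⟩
    have := Nat.find_min' hex hk'
    omega
  choose g hg using hchoice
  exact ⟨g, fun x hx => (hg x).1 hx, (hg xd).2.1 rfl, fun k x hx hne => (hg x).2.2 k hx hne⟩

theorem exists_stabilizing_feedback (hW : IsControllableToSeq step D DU xd W)
    (hDfin : D.Finite) (hxd : xd ∈ oneStepControllableTo step D DU {xd}) (hD : D ⊆ ⋃ k, W k) :
    ∃ g : X → U, MapsTo g D DU ∧ Stabilizes (closedLoop step g) D xd := by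
  obtain ⟨g, hg, hfix, hdesc⟩ := hW.exists_descending_feedback hxd hD
  choose! r hr using fun x (hx : x ∈ D) => mem_iUnion.1 (hD hx)
  obtain ⟨T, hT⟩ := (hDfin.image r).bddAbove
  refine ⟨g, hg, T, fun x hx t ht => ?_⟩
  exact iterate_eq_of_descending hW.zero hfix hdesc t (r x)
    ((hT (mem_image_of_mem r hx)).trans ht) x (hr x hx)

end IsControllableToSeq

end Feedback

theorem eVec_eq_single (N : ℕ) (i : Fin N) : eVec N i = Pi.single i 1 := by
  funext j
  simp [eVec, Pi.single_apply]

theorem mulVec_eVec {M N : ℕ} (L : Matrix (Fin M) (Fin N) ℝ) (j : Fin N) :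
    L *ᵥ eVec N j = L.col j := by
  rw [eVec_eq_single, mulVec_single_one]

theorem deltaSet_finite (N : ℕ) : (deltaSet N).Finite :=
  (finite_range (eVec N)).subset fun _ ⟨i, hi⟩ => ⟨i, hi.symm⟩

theorem vecKron_eVec (M N : ℕ) (a : Fin M) (b : Fin N) :
    vecKron (eVec M a) (eVec N b) = eVec (M * N) (kronEquiv M N (a, b)) := by
  funext k
  have hk : ((kronEquiv M N).symm k).1 = a ∧ ((kronEquiv M N).symm k).2 = b ↔
      k = kronEquiv M N (a, b) := by
    rw [← Equiv.symm_apply_eq, Prod.ext_iff]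
  simp only [vecKron, eVec, ite_mul, one_mul, zero_mul, ← ite_and, hk]

theorem vecKron_mem_deltaSet {M N : ℕ} {u : Fin M → ℝ} {x : Fin N → ℝ} (hu : u ∈ deltaSet M)
    (hx : x ∈ deltaSet N) : vecKron u x ∈ deltaSet (M * N) := by
  obtain ⟨⟨a, rfl⟩, ⟨b, rfl⟩⟩ := And.intro hu hx
  exact ⟨_, vecKron_eVec M N a b⟩

theorem IsLogical.mapsTo_mulVec {M N : ℕ} {L : Matrix (Fin M) (Fin N) ℝ} (hL : IsLogical L) :
    MapsTo L.mulVec (deltaSet N) (deltaSet M) := by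
  rintro _ ⟨j, rfl⟩
  obtain ⟨i, hi⟩ := hL j
  exact ⟨i, (mulVec_eVec L j).trans hi⟩

theorem exists_isLogical_eqOn {M N : ℕ} {g : (Fin N → ℝ) → Fin M → ℝ}
    (hg : MapsTo g (deltaSet N) (deltaSet M)) :
    ∃ L : Matrix (Fin M) (Fin N) ℝ, IsLogical L ∧ EqOn L.mulVec g (deltaSet N) := by
  refine ⟨Matrix.of fun k j => g (eVec N j) k, fun j => hg ⟨j, rfl⟩, ?_⟩
  rintro _ ⟨j, rfl⟩
  rw [mulVec_eVec]
  rfl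

/-- a BCN is state-feedback stabilizable to `x^d` iff
`x^d ∈ E({x^d})` and the iterated one-step controllable-to sets exhaust `Δ_{2^n}`. -/
theorem point_stabilization_criterion (m n : ℕ)
    (MF : Matrix (Fin (2 ^ n)) (Fin (2 ^ m * 2 ^ n)) ℝ) (hMF : IsLogical MF)
    (xd : Fin (2 ^ n) → ℝ) (hxd : xd ∈ deltaSet (2 ^ n))
    (E : Set (Fin (2 ^ n) → ℝ) → Set (Fin (2 ^ n) → ℝ))
    (hE : ∀ S, E S = {x | x ∈ deltaSet (2 ^ n) ∧
      ∃ u ∈ deltaSet (2 ^ m), MF.mulVec (vecKron u x) ∈ S})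
    (W : ℕ → Set (Fin (2 ^ n) → ℝ)) (hW0 : W 0 = {xd})
    (hWs : ∀ k, W (k + 1) = E (⋃ i ∈ Finset.range (k + 1), W i)) :
    (∃ MG : Matrix (Fin (2 ^ m)) (Fin (2 ^ n)) ℝ, IsLogical MG ∧
        ∃ T : ℕ, ∀ x ∈ deltaSet (2 ^ n), ∀ t ≥ T,
          (fun y => MF.mulVec (vecKron (MG.mulVec y) y))^[t] x = xd) ↔
      (xd ∈ E {xd} ∧ (⋃ k, W k) = deltaSet (2 ^ n)) := by
  let step : (Fin (2 ^ m) → ℝ) → (Fin (2 ^ n) → ℝ) → Fin (2 ^ n) → ℝ :=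
    fun u x => MF *ᵥ vecKron u x
  obtain rfl : E = oneStepControllableTo step (deltaSet (2 ^ n)) (deltaSet (2 ^ m)) := funext hE
  have hW : IsControllableToSeq step (deltaSet (2 ^ n)) (deltaSet (2 ^ m)) xd W := ⟨hW0, hWs⟩
  have hstep : ∀ u ∈ deltaSet (2 ^ m), ∀ x ∈ deltaSet (2 ^ n), step u x ∈ deltaSet (2 ^ n) :=
    fun _ hu _ hx => hMF.mapsTo_mulVec (vecKron_mem_deltaSet hu hx)
  constructor
  · rintro ⟨MG, hMG, hstab⟩
    exact hW.conditions_of_stabilizes hxd hMG.mapsTo_mulVec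
      (closedLoop_mapsTo hstep hMG.mapsTo_mulVec) hstab
  · rintro ⟨hfix, hcover⟩
    obtain ⟨g, hg, T, hT⟩ := hW.exists_stabilizing_feedback (deltaSet_finite _) hfix hcover.superset
    obtain ⟨MG, hMG, hMGg⟩ := exists_isLogical_eqOn hg
    refine ⟨MG, hMG, T, fun x hx t ht => ?_⟩
    rw [← hT x hx t ht]
    exact (closedLoop_eqOn step hMGg).iterate_of_mapsTo (closedLoop_mapsTo hstep hg) t hx
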